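/- arXiv:1609.01267 — 14 statements merged into one kernel-verified Lean document; each statement's English description precedes it below -/
import Mathlib

section
/- Let U ⊆ ℂ be open, let f : ℂ → ℂ be holomorphic on U, let I ⊆ ℝ be an interval with 0 ∈ I, and let z : ℝ → ℂ be a solution of the Newton flow on I, i.e. for every t ∈ I one has z(t) ∈ U, f′(z(t)) ≠ 0, and z has derivative −f(z(t))/f′(z(t)) at t. Then for every t ∈ I, f(z(t)) = exp(−t) · f(z(0)). -/
/-- Along a solution of the Newton flow `dz/dt = -f(z)/f'(z)`,
one has `f(z(t)) = exp(-t) * f(z(0))`. -/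
theorem newton_flow_exp_decay
    (U : Set ℂ) (hU : IsOpen U) (f : ℂ → ℂ) (hf : DifferentiableOn ℂ f U)
    (I : Set ℝ) (hI : I.OrdConnected) (h0 : (0 : ℝ) ∈ I)
    (z : ℝ → ℂ)
    (hz : ∀ t ∈ I, z t ∈ U ∧ deriv f (z t) ≠ 0 ∧
      HasDerivAt z (-(f (z t)) / deriv f (z t)) t) :
    ∀ t ∈ I, f (z t) = Complex.exp (-t) * f (z 0) := by
  set g : ℝ → ℂ := fun t => Complex.exp t * f (z t) with hg
  have hgd : ∀ t ∈ I, HasDerivAt g 0 t := by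
    intro t ht
    obtain ⟨hmem, hne, hzd⟩ := hz t ht
    have hfd : DifferentiableAt ℂ f (z t) :=
      hf.differentiableAt (hU.mem_nhds hmem)
    have hcomp : HasDerivAt (fun s => f (z s)) (-(f (z t))) t := by
      have := hfd.hasDerivAt.scomp t hzd
      simpa [smul_eq_mul, div_mul_cancel₀ _ hne, Function.comp_def] using this
    have hexp : HasDerivAt (fun s : ℝ => Complex.exp s) (Complex.exp t) t := by
      have h1 : HasDerivAt (fun s : ℝ => (s : ℂ)) 1 t := by
        exact Complex.ofRealCLM.hasDerivAt (x := t)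
      simpa [Function.comp_def] using (Complex.hasDerivAt_exp (t : ℂ)).scomp t h1
    have h2 := hexp.mul hcomp
    have : Complex.exp ↑t * -f (z t) + f (z t) * Complex.exp ↑t = 0 := by ring
    simpa [hg, this, Pi.mul_def] using h2
  have hconv : Convex ℝ I := hI.convex
  have key : ∀ t ∈ I, g t = g 0 := by
    intro t ht
    have bound : ∀ s ∈ I, ‖(ContinuousLinearMap.smulRight (1 : ℝ →L[ℝ] ℝ)
        (0 : ℂ))‖ ≤ 0 := by
      intro s _; simp
    have := hconv.norm_image_sub_le_of_norm_hasFDerivWithin_le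
      (f := g) (C := 0)
      (fun s hs => ((hgd s hs).hasFDerivAt).hasFDerivWithinAt) bound h0 ht
    have h0' : ‖g t - g 0‖ ≤ 0 := by simpa using this
    have := norm_nonneg (g t - g 0)
    have : ‖g t - g 0‖ = 0 := le_antisymm h0' this
    have := norm_eq_zero.mp this
    exact sub_eq_zero.mp this
  intro t ht
  have h := key t ht
  have hexp_ne : Complex.exp (t : ℂ) ≠ 0 := Complex.exp_ne_zero _
  have : f (z t) = Complex.exp (-(t : ℂ)) * (Complex.exp (t : ℂ) * f (z t)) := by
    rw [← mul_assoc, ← Complex.exp_add]; simp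
  rw [this]
  have h' : Complex.exp ↑t * f (z t) = Complex.exp 0 * f (z 0) := h
  rw [h']
  simp
end

section
/- Let U ⊆ ℂ be open, let f : ℂ → ℂ be holomorphic on U, let I ⊆ ℝ be an interval with 0 ∈ I, and let z : ℝ → ℂ satisfy: for every t ∈ I, z(t) ∈ U and z has derivative V_f(z(t)) at t. If f(z(0)) ≠ 0, then for every t ∈ I there exists a real number r with 0 < r, with r ≤ 1 whenever t ≥ 0, such that f(z(t)) = r · f(z(0)). In particular the argument of f is constant along each trajectory of the desingularized Newton flow. -/
open Complex

/-- The desingularized Newton field of `f`. -/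
noncomputable def desingNewton (f : ℂ → ℂ) (z : ℂ) : ℂ :=
  -(((1 + ‖f z‖ ^ 4 : ℝ) : ℂ))⁻¹ * (starRingEnd ℂ) (deriv f z) * f z

/-- Along a trajectory of the desingularized Newton flow,
`f(z(t))` is a positive real multiple (at most 1 for `t ≥ 0`) of `f(z(0))`;
in particular `arg f` is constant along trajectories. -/
theorem desingNewton_arg_constant
    (U : Set ℂ) (hU : IsOpen U) (f : ℂ → ℂ) (hf : DifferentiableOn ℂ f U)
    (I : Set ℝ) (hI : I.OrdConnected) (h0 : (0 : ℝ) ∈ I)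
    (z : ℝ → ℂ)
    (hz : ∀ t ∈ I, z t ∈ U ∧ HasDerivAt z (desingNewton f (z t)) t)
    (hne : f (z 0) ≠ 0) :
    ∀ t ∈ I, ∃ r : ℝ, 0 < r ∧ (0 ≤ t → r ≤ 1) ∧ f (z t) = (r : ℂ) * f (z 0) := by
  intro t ht
  -- the real coefficient
  set a : ℝ → ℝ := fun s => -(1 + ‖f (z s)‖ ^ 4)⁻¹ * Complex.normSq (deriv f (z s))
    with ha_def
  have ha_nonpos : ∀ s, a s ≤ 0 := by
    intro s
    have h1 : (0:ℝ) ≤ (1 + ‖f (z s)‖ ^ 4)⁻¹ := by positivity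
    have h2 : (0:ℝ) ≤ Complex.normSq (deriv f (z s)) := Complex.normSq_nonneg _
    simp only [ha_def, neg_mul]
    exact neg_nonpos.mpr (mul_nonneg h1 h2)
  -- continuity of z on I
  have hzc : ContinuousOn z I := fun s hs => ((hz s hs).2.continuousAt).continuousWithinAt
  have hmaps : ∀ s ∈ I, z s ∈ U := fun s hs => (hz s hs).1
  -- continuity of deriv f on U
  have hdc : ContinuousOn (deriv f) U := ((hf.analyticOnNhd hU).deriv).continuousOn
  have hfc : ContinuousOn f U := hf.continuousOn
  -- continuity of a on I
  have h1c : ContinuousOn (fun s => f (z s)) I := hfc.comp hzc hmaps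
  have h2c : ContinuousOn (fun s => deriv f (z s)) I := hdc.comp hzc hmaps
  have hac : ContinuousOn a I := by
    apply ContinuousOn.mul
    · apply ContinuousOn.neg
      apply ContinuousOn.inv₀
      · exact continuousOn_const.add ((continuous_norm.comp_continuousOn h1c).pow 4)
      · intro s hs
        positivity
    · exact Complex.continuous_normSq.comp_continuousOn h2c
  -- derivative of f ∘ z
  have hg : ∀ s ∈ I, HasDerivAt (fun u => f (z u)) ((a s : ℂ) * f (z s)) s := by
    intro s hs
    have hfd : HasDerivAt f (deriv f (z s)) (z s) :=
      (hf.differentiableAt (hU.mem_nhds (hmaps s hs))).hasDerivAt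
    have hcomp := hfd.comp s (hz s hs).2
    refine hcomp.congr_deriv (Eq.symm ?_)
    rw [desingNewton, ha_def]
    push_cast
    linear_combination
      (1 + ((‖f (z s)‖ : ℂ)) ^ 4)⁻¹ * f (z s) *
        Complex.mul_conj (deriv f (z s))
  -- the interval and the integral of a
  set J : Set ℝ := Set.uIcc 0 t with hJ_def
  have hJI : J ⊆ I := hI.uIcc_subset h0 ht
  have haJ : ContinuousOn a J := hac.mono hJI
  set A : ℝ → ℝ := fun s => ∫ x in (0:ℝ)..s, a x with hA_def
  have hA : ∀ s ∈ J, HasDerivWithinAt A (a s) J s := by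
    intro s hs
    haveI : Fact (s ∈ Set.uIcc (0:ℝ) t) := ⟨hs⟩
    have hsub : Set.uIcc (0:ℝ) s ⊆ J := Set.uIcc_subset_uIcc Set.left_mem_uIcc hs
    have hint : IntervalIntegrable a MeasureTheory.volume 0 s :=
      (haJ.mono hsub).intervalIntegrable
    exact intervalIntegral.integral_hasDerivWithinAt_right hint
      ⟨J, self_mem_nhdsWithin, haJ.aestronglyMeasurable measurableSet_uIcc⟩
      (haJ s hs)
  -- the auxiliary function F
  set F : ℝ → ℂ := fun s => f (z s) * Complex.exp (-(A s : ℂ)) with hF_def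
  have hF : ∀ s ∈ J, HasDerivWithinAt F 0 J s := by
    intro s hs
    have hgd : HasDerivWithinAt (fun u => f (z u)) ((a s : ℂ) * f (z s)) J s :=
      (hg s (hJI hs)).hasDerivWithinAt
    have hAc : HasDerivWithinAt (fun u => ((A u : ℝ) : ℂ)) ((a s : ℂ)) J s := by
      have := Complex.ofRealCLM.hasFDerivAt.comp_hasDerivWithinAt s (hA s hs)
      exact this
    have hexp : HasDerivWithinAt (fun u => Complex.exp (-(A u : ℂ)))
        (-(a s : ℂ) * Complex.exp (-(A s : ℂ))) J s := by
      have := (hAc.neg).cexp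
      simpa [mul_comm] using this
    have := hgd.mul hexp
    refine this.congr_deriv (Eq.symm ?_)
    ring
  -- F is constant on J
  have hconst : ∀ s ∈ J, F s = F 0 := by
    intro s hs
    have h0J : (0:ℝ) ∈ J := Set.left_mem_uIcc
    have key : ‖F s - F 0‖ ≤ 0 * ‖s - 0‖ := by
      apply Convex.norm_image_sub_le_of_norm_hasFDerivWithin_le
        (f' := fun _ => ContinuousLinearMap.smulRight (1 : ℝ →L[ℝ] ℝ) (0:ℂ))
        (fun x hx => (hF x hx).hasFDerivWithinAt)
        (fun x _ => by simp) (convex_uIcc 0 t) h0J hs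
    rw [zero_mul] at key
    have := norm_sub_eq_zero_iff.mp (le_antisymm key (norm_nonneg _))
    exact this
  have htJ : t ∈ J := Set.right_mem_uIcc
  have hFt := hconst t htJ
  have hA0 : A 0 = 0 := by simp [hA_def]
  refine ⟨Real.exp (A t), Real.exp_pos _, ?_, ?_⟩
  · intro htpos
    rw [Real.exp_le_one_iff]
    have hnn := intervalIntegral.integral_nonneg (f := fun u => -a u) (μ := MeasureTheory.volume) htpos
      (fun u _ => neg_nonneg.mpr (ha_nonpos u))
    rw [intervalIntegral.integral_neg] at hnn
    simpa [hA_def] using neg_nonneg.mp hnn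
  · have hexp_ne : Complex.exp (-(A t : ℂ)) ≠ 0 := Complex.exp_ne_zero _
    have : f (z t) * Complex.exp (-(A t : ℂ)) = f (z 0) := by
      simpa [hF_def, hA0] using hFt
    have h2 : f (z t) = f (z 0) * Complex.exp ((A t : ℂ)) := by
      field_simp at this ⊢
      rw [← this]
      rw [mul_assoc, ← Complex.exp_add]
      simp
    rw [h2, ← Complex.ofReal_exp]
    ring
end

section
/- Let U ⊆ ℂ be open, let f : ℂ → ℂ be holomorphic on U, let I ⊆ ℝ be an interval, and let z : ℝ → ℂ satisfy: for every t ∈ I, z(t) ∈ U and z has derivative V_f(z(t)) at t. Then the function t ↦ |f(z(t))| is antitone (non-increasing) on I. -/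
open Complex

/-!
By the chain rule, along a trajectory `(f ∘ z)' = f'(z) · V_f(z) = -|f'(z)|² / (1 + |f(z)|⁴) · f(z)`
is a nonpositive real multiple of `f(z)`, so `|f(z)|²` has nonpositive derivative.
-/

theorem antitoneOn_of_hasDerivAt_nonpos_of_ordConnected {I : Set ℝ} (hI : I.OrdConnected)
    {g g' : ℝ → ℝ} (hg : ∀ t ∈ I, HasDerivAt g (g' t) t) (hg' : ∀ t ∈ I, g' t ≤ 0) :
    AntitoneOn g I :=
  antitoneOn_of_hasDerivWithinAt_nonpos hI.convex
    (fun t ht => (hg t ht).continuousAt.continuousWithinAt)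
    (fun t ht => (hg t (interior_subset ht)).hasDerivWithinAt)
    (fun t ht => hg' t (interior_subset ht))

theorem deriv_mul_desingNewton (f : ℂ → ℂ) (w : ℂ) :
    deriv f w * desingNewton f w = (-(‖deriv f w‖ ^ 2 / (1 + ‖f w‖ ^ 4)) : ℝ) • f w := by
  rw [desingNewton, Complex.real_smul]
  push_cast
  linear_combination (-(1 + (‖f w‖ : ℂ) ^ 4)⁻¹ * f w) * Complex.mul_conj' (deriv f w)

theorem hasDerivAt_norm_sq_along_desingNewton {f : ℂ → ℂ} {z : ℝ → ℂ} {t : ℝ}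
    (hf : DifferentiableAt ℂ f (z t)) (hz : HasDerivAt z (desingNewton f (z t)) t) :
    HasDerivAt (fun s => ‖f (z s)‖ ^ 2)
      (-2 * (‖deriv f (z t)‖ ^ 2 / (1 + ‖f (z t)‖ ^ 4)) * ‖f (z t)‖ ^ 2) t := by
  have hfz : HasDerivAt (fun s => f (z s)) _ t := hf.hasDerivAt.comp t hz
  convert hfz.norm_sq using 1
  rw [deriv_mul_desingNewton, inner_smul_right, real_inner_self_eq_norm_sq]
  ring

/-- Along a trajectory of the desingularized Newton flow,
`|f(z(t))|` is non-increasing. -/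
theorem desingNewton_abs_antitone
    (U : Set ℂ) (hU : IsOpen U) (f : ℂ → ℂ) (hf : DifferentiableOn ℂ f U)
    (I : Set ℝ) (hI : I.OrdConnected)
    (z : ℝ → ℂ)
    (hz : ∀ t ∈ I, z t ∈ U ∧ HasDerivAt z (desingNewton f (z t)) t) :
    AntitoneOn (fun t => ‖f (z t)‖) I := by
  have hsq : AntitoneOn (fun t => ‖f (z t)‖ ^ 2) I := by
    refine antitoneOn_of_hasDerivAt_nonpos_of_ordConnected hI
      (g' := fun t => -2 * (‖deriv f (z t)‖ ^ 2 / (1 + ‖f (z t)‖ ^ 4)) * ‖f (z t)‖ ^ 2)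
      (fun t ht => ?_) (fun t _ => ?_)
    · obtain ⟨hzU, hzt⟩ := hz t ht
      exact hasDerivAt_norm_sq_along_desingNewton (hf.differentiableAt (hU.mem_nhds hzU)) hzt
    · have hrate : 0 ≤ ‖deriv f (z t)‖ ^ 2 / (1 + ‖f (z t)‖ ^ 4) * ‖f (z t)‖ ^ 2 := by positivity
      linarith
  intro a ha b hb hab
  exact (pow_le_pow_iff_left₀ (norm_nonneg _) (norm_nonneg _) two_ne_zero).1 (hsq ha hb hab)
end

section
/- Let U ⊆ ℂ be open, let f : ℂ → ℂ be holomorphic on U, let I ⊆ ℝ be an interval with 0 ∈ I, and let z : ℝ → ℂ be a solution of the Newton flow on I, i.e. for every t ∈ I one has z(t) ∈ U, f′(z(t)) ≠ 0, and z has derivative −f(z(t))/f′(z(t)) at t. If f(z(0)) ≠ 0, then z is injective on I; in particular the Newton flow has no closed orbits through nonequilibrium points. -/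
/-! Along a Newton trajectory `(f ∘ z)' = f'(z) · (-f(z)/f'(z)) = -(f ∘ z)`, so `f (z t) * e^t` is
constant on `I`, equal to `f (z 0) ≠ 0`. Hence `f ∘ z` never vanishes on `I`, and `z s = z t` forces
`e^s = e^t`, i.e. `s = t`. -/

open Complex

theorem Convex.eq_of_forall_hasDerivWithinAt_eq_zero {E : Type*} [NormedAddCommGroup E]
    [NormedSpace ℝ E] {g : ℝ → E} {s : Set ℝ} (hs : Convex ℝ s)
    (hg : ∀ x ∈ s, HasDerivWithinAt g 0 s x) {x y : ℝ} (hx : x ∈ s) (hy : y ∈ s) :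
    g x = g y := by
  have hle : ‖g y - g x‖ ≤ 0 * ‖y - x‖ :=
    hs.norm_image_sub_le_of_norm_hasDerivWithin_le hg (fun _ _ ↦ by simp) hx hy
  rw [zero_mul, norm_le_zero_iff, sub_eq_zero] at hle
  exact hle.symm

theorem HasDerivAt.comp_newtonFlow {f : ℂ → ℂ} {f' : ℂ} {z : ℝ → ℂ} {t : ℝ}
    (hf : HasDerivAt f f' (z t)) (hf' : f' ≠ 0) (hz : HasDerivAt z (-f (z t) / f') t) :
    HasDerivAt (fun s ↦ f (z s)) (-f (z t)) t :=
  (hf.comp t hz).congr_deriv (mul_div_cancel₀ _ hf')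

theorem HasDerivAt.mul_exp_eq_zero {g : ℝ → ℂ} {t : ℝ} (hg : HasDerivAt g (-g t) t) :
    HasDerivAt (fun s ↦ g s * cexp s) 0 t :=
  (hg.mul (hasDerivAt_exp (t : ℂ)).comp_ofReal).congr_deriv (by ring)

theorem injOn_of_forall_mul_exp_eq {f : ℂ → ℂ} {z : ℝ → ℂ} {I : Set ℝ} {c : ℂ} (hc : c ≠ 0)
    (h : ∀ t ∈ I, f (z t) * cexp t = c) : Set.InjOn z I := by
  intro s hs t ht hst
  have hfs : f (z s) ≠ 0 := left_ne_zero_of_mul (h s hs ▸ hc)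
  have hexp : cexp s = cexp t :=
    mul_left_cancel₀ hfs (by rw [h s hs, hst, h t ht])
  exact_mod_cast Real.exp_injective (by exact_mod_cast hexp)

/-- A solution of the Newton flow through a point where `f` does not vanish
is injective on its interval of definition; in particular there are no closed orbits
through nonequilibrium points. -/
theorem newton_flow_injective
    (U : Set ℂ) (hU : IsOpen U) (f : ℂ → ℂ) (hf : DifferentiableOn ℂ f U)
    (I : Set ℝ) (hI : I.OrdConnected) (h0 : (0 : ℝ) ∈ I)
    (z : ℝ → ℂ)
    (hz : ∀ t ∈ I, z t ∈ U ∧ deriv f (z t) ≠ 0 ∧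
      HasDerivAt z (-(f (z t)) / deriv f (z t)) t)
    (hne : f (z 0) ≠ 0) :
    Set.InjOn z I := by
  have hderiv : ∀ t ∈ I, HasDerivAt (fun s ↦ f (z s) * cexp s) 0 t := by
    intro t ht
    obtain ⟨hzU, hf'ne, hzt⟩ := hz t ht
    have hft : HasDerivAt f (deriv f (z t)) (z t) :=
      (hf.differentiableAt (hU.mem_nhds hzU)).hasDerivAt
    exact (hft.comp_newtonFlow hf'ne hzt).mul_exp_eq_zero
  refine injOn_of_forall_mul_exp_eq (f := f) hne fun t ht ↦ ?_
  simpa using hI.convex.eq_of_forall_hasDerivWithinAt_eq_zero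
    (fun s hs ↦ (hderiv s hs).hasDerivWithinAt) ht h0
end

section
/- Let f : ℂ → ℂ be complex differentiable at z with f(z) ≠ 0, and let g be the function w ↦ (f(w))⁻¹. Then V_g(z) = −V_f(z); that is, the desingularized Newton field of 1/f is the negative of the desingularized Newton field of f. -/
/-! Since `(1/f)' = -f'/f²`, the unweighted field `conj (1/f)' · (1/f) = -conj f' / (f̄² f)` equals
`-conj f' · f / |f|⁴`, and the weight `(1 + |f|⁻⁴)⁻¹ = |f|⁴ / (1 + |f|⁴)` of `1/f` cancels the
factor `|f|⁻⁴` exactly. -/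

open Complex

theorem one_add_norm_inv_pow {𝕜 : Type*} [NormedDivisionRing 𝕜] {a : 𝕜} (ha : a ≠ 0)
    (n : ℕ) : 1 + ‖a⁻¹‖ ^ n = (1 + ‖a‖ ^ n) / ‖a‖ ^ n := by
  have : ‖a‖ ≠ 0 := norm_ne_zero_iff.2 ha
  rw [norm_inv, inv_pow]
  field_simp
  ring

/-- The desingularized Newton field of `1/f` is the negative of that of `f`. -/
theorem desingNewton_duality
    (f : ℂ → ℂ) (z : ℂ) (hf : DifferentiableAt ℂ f z) (hfz : f z ≠ 0) :
    desingNewton (fun w => (f w)⁻¹) z = -desingNewton f z := by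
  have hconj : starRingEnd ℂ (f z) ≠ 0 := (map_ne_zero _).2 hfz
  have hweight : (1 + ‖f z‖ ^ 4 : ℂ) ≠ 0 := by
    exact_mod_cast (by positivity : (1 + ‖f z‖ ^ 4 : ℝ) ≠ 0)
  have hnorm : (‖f z‖ : ℂ) ^ 4 = (f z * starRingEnd ℂ (f z)) ^ 2 := by
    rw [mul_conj']
    ring
  rw [desingNewton, desingNewton, deriv_fun_inv'' hf hfz, one_add_norm_inv_pow hfz]
  simp only [map_neg, map_div₀, map_pow]
  push_cast
  rw [hnorm] at hweight ⊢
  field_simp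
end

section
/- Let f : ℂ → ℂ be complex differentiable at z and let c ∈ ℂ with c ≠ 0. Then V_{c·f}(z) = λ · V_f(z), where λ = |c|² · (1 + |f(z)|⁴) / (1 + |c|⁴·|f(z)|⁴) is a strictly positive real number; hence the desingularized Newton fields of f and of c·f are positively proportional at every point, so all members of the class [f] = {c·f : c ≠ 0} have identical phase portraits. -/
open Complex

theorem desingNewton_const_mul (f : ℂ → ℂ) (z c : ℂ) :
    desingNewton (fun w => c * f w) z =
      -((1 + ‖c‖ ^ 4 * ‖f z‖ ^ 4 : ℝ) : ℂ)⁻¹ * ((‖c‖ ^ 2 : ℝ) : ℂ) *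
        (starRingEnd ℂ) (deriv f z) * f z := by
  have hconj : (starRingEnd ℂ) c * c = ((‖c‖ ^ 2 : ℝ) : ℂ) := by
    rw [conj_mul', ofReal_pow]
  simp only [desingNewton, deriv_const_mul_field', map_mul, norm_mul, mul_pow]
  linear_combination -((1 + ‖c‖ ^ 4 * ‖f z‖ ^ 4 : ℝ) : ℂ)⁻¹ *
    (starRingEnd ℂ) (deriv f z) * f z * hconj

theorem desingNewton_scaling_general
    (f : ℂ → ℂ) (z : ℂ) (c : ℂ) (hc : c ≠ 0) :
    0 < ‖c‖ ^ 2 * (1 + ‖f z‖ ^ 4) /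
        (1 + ‖c‖ ^ 4 * ‖f z‖ ^ 4) ∧
    desingNewton (fun w => c * f w) z =
      ((‖c‖ ^ 2 * (1 + ‖f z‖ ^ 4) /
        (1 + ‖c‖ ^ 4 * ‖f z‖ ^ 4) : ℝ) : ℂ) * desingNewton f z := by
  refine ⟨by positivity, ?_⟩
  have hf : ((1 + ‖f z‖ ^ 4 : ℝ) : ℂ) ≠ 0 := ofReal_ne_zero.mpr (by positivity)
  have hcf : ((1 + ‖c‖ ^ 4 * ‖f z‖ ^ 4 : ℝ) : ℂ) ≠ 0 := ofReal_ne_zero.mpr (by positivity)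
  rw [desingNewton_const_mul, desingNewton, ofReal_div, ofReal_mul]
  field_simp

/-- The desingularized Newton fields of `f` and of `c·f` (`c ≠ 0`) are
positively proportional, with factor `λ = |c|²(1+|f z|⁴)/(1+|c|⁴|f z|⁴) > 0`. -/
theorem desingNewton_scaling
    (f : ℂ → ℂ) (z : ℂ) (hf : DifferentiableAt ℂ f z) (c : ℂ) (hc : c ≠ 0) :
    0 < ‖c‖ ^ 2 * (1 + ‖f z‖ ^ 4) /
        (1 + ‖c‖ ^ 4 * ‖f z‖ ^ 4) ∧
    desingNewton (fun w => c * f w) z =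
      ((‖c‖ ^ 2 * (1 + ‖f z‖ ^ 4) /
        (1 + ‖c‖ ^ 4 * ‖f z‖ ^ 4) : ℝ) : ℂ) * desingNewton f z :=
  desingNewton_scaling_general f z c hc
end

section
/- Let f : ℂ → ℂ be analytic at z₀ with f(z₀) = 0 and f′(z₀) ≠ 0 (a simple zero). Then the desingularized Newton field V_f, regarded as a map ℂ → ℂ over ℝ, is real Fréchet differentiable at z₀ with derivative the real-linear map dz ↦ −|f′(z₀)|² · dz, i.e. HasFDerivAt V_f (−|f′(z₀)|² • id) z₀. In particular both eigenvalues of the linearization equal −|f′(z₀)|² < 0, so a simple zero is a hyperbolic attractor of the desingularized Newton flow. -/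
open Complex

/-! The field is `c · f` with `c = -(1 + |f|⁴)⁻¹ · conj f'`. Since `f(z₀) = 0`, the product rule
needs only continuity of `c` at `z₀` (`(c z - c z₀) f z` is `o(1) · O(z - z₀)`), and the
derivative is `c(z₀) · f'(z₀) = -conj(f'(z₀)) f'(z₀) = -|f'(z₀)|²` times the identity. -/

open Asymptotics Topology

theorem HasFDerivAt.continuousAt_mul_of_eq_zero {𝕜 E 𝔸 : Type*} [NontriviallyNormedField 𝕜]
    [NormedAddCommGroup E] [NormedSpace 𝕜 E] [NormedRing 𝔸] [NormedAlgebra 𝕜 𝔸]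
    {c f : E → 𝔸} {f' : E →L[𝕜] 𝔸} {x : E} (hf : HasFDerivAt f f' x) (hc : ContinuousAt c x)
    (hfx : f x = 0) : HasFDerivAt (fun y => c y * f y) (c x • f') x := by
  refine HasFDerivAt.of_isLittleO ?_
  have hc' : (fun y => c y - c x) =o[𝓝 x] (fun _ => (1 : ℝ)) :=
    (isLittleO_one_iff ℝ).2 (tendsto_sub_nhds_zero_iff.2 hc)
  have hcf : (fun y => (c y - c x) * (f y - f x)) =o[𝓝 x] (fun y => y - x) := by
    simpa using (hc'.mul_isBigO hf.isBigO_sub.norm_right).norm_right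
  have hrem := hf.isLittleO.const_mul_left (c x)
  refine (hcf.add hrem).congr_left fun y => ?_
  simp only [hfx, sub_zero, smul_apply, smul_eq_mul, mul_zero]
  noncomm_ring

/-- At a simple zero `z₀` of `f`, the desingularized Newton field is real
Fréchet differentiable with derivative `dz ↦ -|f'(z₀)|² · dz`; in particular the
linearization is a negative multiple of the identity, so `z₀` is a hyperbolic attractor. -/
theorem desingNewton_simple_zero_attractor
    (f : ℂ → ℂ) (z₀ : ℂ) (hf : AnalyticAt ℂ f z₀)
    (h0 : f z₀ = 0) (h1 : deriv f z₀ ≠ 0) :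
    HasFDerivAt (desingNewton f)
      ((-(‖deriv f z₀‖ ^ 2) : ℝ) • ContinuousLinearMap.id ℝ ℂ) z₀ ∧
    (-(‖deriv f z₀‖ ^ 2) : ℝ) < 0 := by
  refine ⟨?_, neg_lt_zero.2 (pow_pos (norm_pos_iff.2 h1) 2)⟩
  have hc : ContinuousAt
      (fun z => -(((1 + ‖f z‖ ^ 4 : ℝ) : ℂ))⁻¹ * (starRingEnd ℂ) (deriv f z)) z₀ := by
    have hf_cont := hf.continuousAt
    have hderiv_cont := hf.deriv.continuousAt
    have hden : ((1 + ‖f z₀‖ ^ 4 : ℝ) : ℂ) ≠ 0 := by simp [h0]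
    fun_prop (disch := assumption)
  have hf' := (hf.differentiableAt.hasDerivAt.hasFDerivAt).restrictScalars ℝ
  refine (hf'.continuousAt_mul_of_eq_zero hc h0).congr_fderiv ?_
  ext w
  simp [h0]
  linear_combination w * conj_mul' (deriv f z₀)
end

section
/- Let U ⊆ ℂ be open, z₀ ∈ U, and let h : ℂ → ℂ be holomorphic on U with h(z₀) = 0, h′(z₀) ≠ 0, and h(z) ≠ 0 for all z ∈ U \ {z₀}; set f(z) = (h(z))⁻¹, so that f has a simple pole at z₀. Define W : U → ℂ by W(z) = (1 + |h(z)|⁴)⁻¹ · conj(h′(z)) · h(z). Then: (i) V_f(z) = W(z) for every z ∈ U \ {z₀}, so W is the continuous extension of the desingularized Newton field of f across the pole, with W(z₀) = 0; and (ii) W is real Fréchet differentiable at z₀ with derivative the real-linear map dz ↦ |h′(z₀)|² · dz, i.e. HasFDerivAt W (|h′(z₀)|² • id) z₀. In particular a simple pole is a hyperbolic repellor of the desingularized Newton flow. -/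
/-!
Away from `z₀`, `f = h⁻¹` has `f' = -h' / h²` and `(1 + |f|⁴)⁻¹ = |h|⁴ / (1 + |h|⁴)`; since
`|h|⁴ = h² conj(h)²` this turns `V_f` into `W`. Near `z₀`, `W = c · h` with the continuous
coefficient `c = (1 + |h|⁴)⁻¹ conj(h')`. A continuous factor multiplying a function that vanishes
at the point differentiates like a constant, so `DW(z₀) = c(z₀) h'(z₀) = conj(h'(z₀)) h'(z₀)`.
-/

open Complex

open ComplexConjugate Asymptotics Filter Topology

/-- Unlike `HasFDerivAt.smul`, `c` need not be differentiable: the error term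
`(c y - c x) • f y` is `o(1) • O(y - x)`. -/
theorem HasFDerivAt.smul_of_continuousAt_of_eq_zero {𝕜 : Type*} [NontriviallyNormedField 𝕜]
    {E : Type*} [NormedAddCommGroup E] [NormedSpace 𝕜 E]
    {F : Type*} [NormedAddCommGroup F] [NormedSpace 𝕜 F]
    {𝕜' : Type*} [NormedRing 𝕜'] [NormedAlgebra 𝕜 𝕜'] [Module 𝕜' F] [IsBoundedSMul 𝕜' F]
    [IsScalarTower 𝕜 𝕜' F] {c : E → 𝕜'} {f : E → F} {f' : E →L[𝕜] F} {x : E}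
    (hc : ContinuousAt c x) (hf : HasFDerivAt f f' x) (hfx : f x = 0) :
    HasFDerivAt (fun y => c y • f y) (c x • f') x := by
  have hc' : (fun y => c y - c x) =o[𝓝 x] (fun _ => (1 : ℝ)) :=
    (isLittleO_one_iff ℝ).2 (tendsto_sub_nhds_zero_iff.2 hc.tendsto)
  have hf' : (fun y => f y - f x) =O[𝓝 x] (fun y => ‖y - x‖) :=
    hf.isBigO_sub.norm_right
  have hvar : (fun y => (c y - c x) • (f y - f x)) =o[𝓝 x] (fun y => y - x) :=
    isLittleO_norm_right.mp (by simpa using hc'.smul_isBigO hf')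
  refine HasFDerivAt.of_isLittleO <|
    (hvar.add (hf.isLittleO.const_smul_left (c x))).congr_left fun y => ?_
  simp only [hfx, FunLike.coe_smul, Pi.smul_apply, smul_sub, sub_smul, smul_zero]
  abel

theorem desingNewton_inv_eq {h : ℂ → ℂ} {z : ℂ} (hd : DifferentiableAt ℂ h z) (hz : h z ≠ 0) :
    desingNewton (fun w => (h w)⁻¹) z =
      (((1 + ‖h z‖ ^ 4 : ℝ) : ℂ))⁻¹ * conj (deriv h z) * h z := by
  rw [desingNewton, deriv_fun_inv'' hd hz]
  set a := h z
  have hsq : ((‖a‖ : ℝ) : ℂ) ^ 2 = a * conj a := (mul_conj' a).symm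
  have hden : (1 : ℂ) + (a * conj a) ^ 2 ≠ 0 := by
    rw [← hsq, ← pow_mul]
    exact_mod_cast (by positivity : (1 + ‖a‖ ^ 4 : ℝ) ≠ 0)
  have hconj : conj a ≠ 0 := by simpa using hz
  simp only [norm_inv, map_neg, map_div₀, map_pow]
  push_cast
  rw [inv_pow, show ((‖a‖ : ℂ)) ^ 4 = ((‖a‖ : ℂ) ^ 2) ^ 2 by ring, hsq]
  field_simp
  ring

theorem desingNewton_simple_pole_repellor_general
    (U : Set ℂ) (hU : IsOpen U) (z₀ : ℂ) (hz₀ : z₀ ∈ U)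
    (h : ℂ → ℂ) (hh : DifferentiableOn ℂ h U)
    (h0 : h z₀ = 0)
    (hne : ∀ z ∈ U \ {z₀}, h z ≠ 0)
    (W : ℂ → ℂ)
    (hW : ∀ z, W z =
      (((1 + ‖h z‖ ^ 4 : ℝ) : ℂ))⁻¹ * (starRingEnd ℂ) (deriv h z) * h z) :
    (∀ z ∈ U \ {z₀}, desingNewton (fun w => (h w)⁻¹) z = W z) ∧
    W z₀ = 0 ∧
    HasFDerivAt W ((‖deriv h z₀‖ ^ 2 : ℝ) • ContinuousLinearMap.id ℝ ℂ) z₀ := by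
  have hdiff : ∀ z ∈ U, DifferentiableAt ℂ h z := fun z hz =>
    hh.differentiableAt (hU.mem_nhds hz)
  refine ⟨fun z hz => by rw [hW, desingNewton_inv_eq (hdiff z hz.1) (hne z hz)],
    by rw [hW, h0, mul_zero], ?_⟩
  have hcoeff : ContinuousAt
      (fun z => (((1 + ‖h z‖ ^ 4 : ℝ) : ℂ))⁻¹ * conj (deriv h z)) z₀ := by
    have hh_cont := hh.continuousOn.continuousAt (hU.mem_nhds hz₀)
    have hderiv_cont := (hh.deriv hU).continuousOn.continuousAt (hU.mem_nhds hz₀)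
    fun_prop (disch := exact_mod_cast (by positivity : (1 + ‖h z₀‖ ^ 4 : ℝ) ≠ 0))
  rw [show W = fun z => ((((1 + ‖h z‖ ^ 4 : ℝ) : ℂ))⁻¹ * conj (deriv h z)) • h z from funext hW]
  refine (HasFDerivAt.smul_of_continuousAt_of_eq_zero hcoeff
    ((hdiff z₀ hz₀).hasDerivAt.hasFDerivAt.restrictScalars ℝ) h0).congr_fderiv ?_
  ext dz
  simp [h0, ← mul_conj']
  ring

/-- Near a simple pole `z₀` of `f = 1/h`, the desingularized Newton field
extends continuously by `W(z) = (1+|h z|⁴)⁻¹ · conj(h'(z)) · h(z)`, with `W z₀ = 0`, and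
`W` is real Fréchet differentiable at `z₀` with derivative `dz ↦ |h'(z₀)|² · dz`;
hence a simple pole is a hyperbolic repellor. -/
theorem desingNewton_simple_pole_repellor
    (U : Set ℂ) (hU : IsOpen U) (z₀ : ℂ) (hz₀ : z₀ ∈ U)
    (h : ℂ → ℂ) (hh : DifferentiableOn ℂ h U)
    (h0 : h z₀ = 0) (h1 : deriv h z₀ ≠ 0)
    (hne : ∀ z ∈ U \ {z₀}, h z ≠ 0)
    (W : ℂ → ℂ)
    (hW : ∀ z, W z =
      (((1 + ‖h z‖ ^ 4 : ℝ) : ℂ))⁻¹ * (starRingEnd ℂ) (deriv h z) * h z) :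
    (∀ z ∈ U \ {z₀}, desingNewton (fun w => (h w)⁻¹) z = W z) ∧
    W z₀ = 0 ∧
    HasFDerivAt W ((‖deriv h z₀‖ ^ 2 : ℝ) • ContinuousLinearMap.id ℝ ℂ) z₀ :=
  desingNewton_simple_pole_repellor_general U hU z₀ hz₀ h hh h0 hne W hW
end

section
/- Let f : ℂ → ℂ be analytic at z₀ with f(z₀) ≠ 0, f′(z₀) = 0 and f″(z₀) ≠ 0 (a simple critical point). Then the desingularized Newton field V_f is real Fréchet differentiable at z₀ with derivative the real-linear (complex antilinear) map L : ℂ → ℂ, L(dz) = −(1 + |f(z₀)|⁴)⁻¹ · f(z₀) · conj(f″(z₀) · dz); moreover the determinant of L as an ℝ-linear endomorphism of ℂ equals −((1 + |f(z₀)|⁴)⁻¹ · |f(z₀)| · |f″(z₀)|)², which is strictly negative. Hence a simple critical point is a hyperbolic saddle of the desingularized Newton flow. -/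
open Complex

/-!
Write `V_f = w · conj f'` with the real-smooth weight `w = -(1 + |f|⁴)⁻¹ f`. Since `f'(z₀) = 0`,
the product rule loses the term carrying the derivative of `w`, so `DV_f(z₀) dz = a · conj dz`
with `a = w(z₀) · conj f''(z₀)`. As a real map, `dz ↦ a · conj dz` is multiplication by `a`
(determinant `|a|²`) after conjugation (determinant `-1`), so its determinant is `-|a|² < 0`.
-/

open ComplexConjugate

theorem Complex.det_of_apply_eq_mul_conj {a : ℂ} {L : ℂ →ₗ[ℝ] ℂ}
    (hL : ∀ z, L z = a * conj z) : LinearMap.det L = -‖a‖ ^ 2 := by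
  have hL' : L = Algebra.lmul ℝ ℂ a ∘ₗ conjAe.toLinearEquiv.toLinearMap :=
    LinearMap.ext hL
  rw [hL', LinearMap.det_comp, ← Algebra.norm_apply, Algebra.norm_complex_apply, det_conjAe,
    normSq_eq_norm_sq, mul_neg_one]

theorem DifferentiableAt.hasFDerivAt_mul_of_right_eq_zero {𝕜 E 𝔸 : Type*}
    [NontriviallyNormedField 𝕜] [NormedAddCommGroup E] [NormedSpace 𝕜 E]
    [NormedCommRing 𝔸] [NormedAlgebra 𝕜 𝔸]
    {c d : E → 𝔸} {d' : E →L[𝕜] 𝔸} {x : E} (hc : DifferentiableAt 𝕜 c x)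
    (hd : HasFDerivAt d d' x) (hd0 : d x = 0) :
    HasFDerivAt (fun y => c y * d y) (c x • d') x := by
  convert hc.hasFDerivAt.fun_mul hd using 1
  ext v
  simp [hd0]

theorem HasDerivAt.hasFDerivAt_conj {g : ℂ → ℂ} {g' z : ℂ} (hg : HasDerivAt g g' z) :
    HasFDerivAt (fun w => conj (g w)) (conj g' • conjCLE.toContinuousLinearMap) z := by
  refine (conjCLE.toContinuousLinearMap.hasFDerivAt.comp z
    (hg.hasFDerivAt.restrictScalars ℝ)).congr_fderiv ?_
  ext dz
  simp [mul_comm]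

theorem DifferentiableAt.ofReal_one_add_norm_pow_four_inv {E F : Type*}
    [NormedAddCommGroup E] [NormedSpace ℝ E] [NormedAddCommGroup F] [InnerProductSpace ℝ F]
    {f : E → F} {x : E} (hf : DifferentiableAt ℝ f x) :
    DifferentiableAt ℝ (fun y => (((1 + ‖f y‖ ^ 4 : ℝ) : ℂ))⁻¹) x := by
  have hreal : DifferentiableAt ℝ (fun y => 1 + ‖f y‖ ^ 4) x := by
    simp only [show ∀ r : ℝ, r ^ 4 = (r ^ 2) ^ 2 by intro r; ring]
    exact (differentiableAt_const _).add (hf.norm_sq ℝ |>.pow 2)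
  exact (ofRealCLM.differentiableAt.comp x hreal).inv (ofReal_ne_zero.mpr (by positivity))

theorem desingNewton_eq_mul_conj_deriv (f : ℂ → ℂ) :
    desingNewton f = fun z => (-(((1 + ‖f z‖ ^ 4 : ℝ) : ℂ))⁻¹ * f z) * conj (deriv f z) := by
  funext z; rw [desingNewton]; ring

/-- At a simple critical point `z₀` of `f` (i.e. `f z₀ ≠ 0`,
`f'(z₀) = 0`, `f''(z₀) ≠ 0`), the desingularized Newton field is real Fréchet
differentiable with the complex antilinear derivative
`dz ↦ -(1+|f z₀|⁴)⁻¹ · f z₀ · conj(f''(z₀)·dz)`, whose determinant as an ℝ-linear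
endomorphism of ℂ is `-((1+|f z₀|⁴)⁻¹ |f z₀| |f''(z₀)|)² < 0`: a hyperbolic saddle. -/
theorem desingNewton_simple_critical_saddle
    (f : ℂ → ℂ) (z₀ : ℂ) (hf : AnalyticAt ℂ f z₀)
    (h0 : f z₀ ≠ 0) (h1 : deriv f z₀ = 0) (h2 : deriv (deriv f) z₀ ≠ 0) :
    ∃ L : ℂ →L[ℝ] ℂ,
      (∀ dz : ℂ, L dz = -(((1 + ‖f z₀‖ ^ 4 : ℝ) : ℂ))⁻¹ * f z₀ *
          (starRingEnd ℂ) (deriv (deriv f) z₀ * dz)) ∧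
      HasFDerivAt (desingNewton f) L z₀ ∧
      LinearMap.det (L : ℂ →ₗ[ℝ] ℂ) =
        -(((1 + ‖f z₀‖ ^ 4)⁻¹ * ‖f z₀‖ *
            ‖deriv (deriv f) z₀‖) ^ 2) ∧
      LinearMap.det (L : ℂ →ₗ[ℝ] ℂ) < 0 := by
  set r : ℝ := 1 + ‖f z₀‖ ^ 4
  have hr : 0 < r := by positivity
  set a : ℂ := -(r : ℂ)⁻¹ * f z₀ * conj (deriv (deriv f) z₀)
  set L : ℂ →L[ℝ] ℂ := a • conjCLE.toContinuousLinearMap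
  have hfR : DifferentiableAt ℝ f z₀ := hf.differentiableAt.restrictScalars ℝ
  have hw : DifferentiableAt ℝ (fun z => -(((1 + ‖f z‖ ^ 4 : ℝ) : ℂ))⁻¹ * f z) z₀ :=
    hfR.ofReal_one_add_norm_pow_four_inv.neg.mul hfR
  have hderiv : HasFDerivAt (desingNewton f) L z₀ := by
    rw [desingNewton_eq_mul_conj_deriv]
    simpa only [smul_smul] using hw.hasFDerivAt_mul_of_right_eq_zero
      hf.deriv.differentiableAt.hasDerivAt.hasFDerivAt_conj (by rw [h1, map_zero])
  have hdet : LinearMap.det (L : ℂ →ₗ[ℝ] ℂ) = -‖a‖ ^ 2 :=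
    det_of_apply_eq_mul_conj fun _ => rfl
  have hnorm : ‖a‖ = r⁻¹ * ‖f z₀‖ * ‖deriv (deriv f) z₀‖ := by
    simp only [a, norm_mul, norm_neg, norm_inv, norm_conj, norm_real, Real.norm_of_nonneg hr.le]
  refine ⟨L, fun dz => ?_, hderiv, by rw [hdet, hnorm], ?_⟩
  · change a * conj dz = _
    rw [map_mul]
    ring
  · rw [hdet, hnorm]
    exact neg_neg_of_pos (pow_pos (mul_pos (mul_pos (inv_pos.mpr hr) (norm_pos_iff.mpr h0))
      (norm_pos_iff.mpr h2)) 2)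
end

section
/- Let p, q : ℂ → ℂ be complex differentiable at z with q(z) ≠ 0, and let f be the quotient w ↦ p(w)/q(w). Then the desingularized Newton field of f satisfies V_f(z) = −(|p(z)|⁴ + |q(z)|⁴)⁻¹ · ( p(z)·conj(p′(z))·|q(z)|² − q(z)·conj(q′(z))·|p(z)|² ). -/
open Complex

lemma one_add_norm_div_pow_four {a b : ℂ} (hb : b ≠ 0) :
    1 + ‖a / b‖ ^ 4 = (‖a‖ ^ 4 + ‖b‖ ^ 4) / ‖b‖ ^ 4 := by
  have hb4 : ‖b‖ ^ 4 ≠ 0 := by positivity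
  rw [norm_div, div_pow]
  field_simp
  ring

/-- Writing `|b|⁴ = b² conj(b)²` clears both denominators. -/
lemma ofReal_norm_pow_four_mul_conj_div_sq_mul_div (a b a' b' : ℂ) (hb : b ≠ 0) :
    ((‖b‖ ^ 4 : ℝ) : ℂ) * ((starRingEnd ℂ) ((a' * b - a * b') / b ^ 2) * (a / b)) =
      a * (starRingEnd ℂ) a' * ((‖b‖ ^ 2 : ℝ) : ℂ) -
        b * (starRingEnd ℂ) b' * ((‖a‖ ^ 2 : ℝ) : ℂ) := by
  have hb' : (starRingEnd ℂ) b ≠ 0 := (map_ne_zero _).mpr hb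
  have hb4 : ((‖b‖ ^ 4 : ℝ) : ℂ) = (b * (starRingEnd ℂ) b) ^ 2 := by
    rw [mul_conj']
    push_cast
    ring
  rw [hb4]
  push_cast
  rw [← mul_conj', ← mul_conj']
  simp only [map_div₀, map_sub, map_mul, map_pow]
  field_simp

/-- For `f = p/q` with `q z ≠ 0`, the desingularized Newton field equals
`-(|p|⁴+|q|⁴)⁻¹ (p·conj(p')·|q|² - q·conj(q')·|p|²)`. -/
theorem desingNewton_quotient_formula
    (p q : ℂ → ℂ) (z : ℂ)
    (hp : DifferentiableAt ℂ p z) (hq : DifferentiableAt ℂ q z) (hqz : q z ≠ 0) :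
    desingNewton (fun w => p w / q w) z =
      -(((‖p z‖ ^ 4 + ‖q z‖ ^ 4 : ℝ) : ℂ))⁻¹ *
        (p z * (starRingEnd ℂ) (deriv p z) * ((‖q z‖ ^ 2 : ℝ) : ℂ) -
         q z * (starRingEnd ℂ) (deriv q z) * ((‖p z‖ ^ 2 : ℝ) : ℂ)) := by
  have hq4 : ((‖q z‖ ^ 4 : ℝ) : ℂ) ≠ 0 := by exact_mod_cast (by positivity : ‖q z‖ ^ 4 ≠ 0)
  rw [desingNewton, deriv_fun_div hp hq hqz, one_add_norm_div_pow_four hqz,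
    ← ofReal_norm_pow_four_mul_conj_div_sq_mul_div _ _ _ _ hqz]
  push_cast
  field_simp
end

section
/- Let p, q : ℂ → ℂ be entire functions such that for every z ∈ ℂ, p(z) ≠ 0 or q(z) ≠ 0 (no common zeros). Then the function W : ℂ → ℂ defined by W(z) = −(|p(z)|⁴ + |q(z)|⁴)⁻¹ · ( p(z)·conj(p′(z))·|q(z)|² − q(z)·conj(q′(z))·|p(z)|² ) is continuously real differentiable on all of ℂ, i.e. ContDiff ℝ 1 W. (W is the desingularized Newton field of the meromorphic function p/q, defined on the whole plane including the poles and zeros.) -/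
open Complex

/-- If `p`, `q` are entire with no common zeros, then the desingularized
Newton field of `p/q`, i.e.
`W(z) = -(|p|⁴+|q|⁴)⁻¹ (p·conj(p')·|q|² - q·conj(q')·|p|²)`,
is continuously real differentiable on all of `ℂ`. -/
theorem desingNewton_entire_quotient_C1
    (p q : ℂ → ℂ) (hp : Differentiable ℂ p) (hq : Differentiable ℂ q)
    (hpq : ∀ z : ℂ, p z ≠ 0 ∨ q z ≠ 0)
    (W : ℂ → ℂ)
    (hW : ∀ z, W z =
      -(((‖p z‖ ^ 4 + ‖q z‖ ^ 4 : ℝ) : ℂ))⁻¹ *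
        (p z * (starRingEnd ℂ) (deriv p z) * ((‖q z‖ ^ 2 : ℝ) : ℂ) -
         q z * (starRingEnd ℂ) (deriv q z) * ((‖p z‖ ^ 2 : ℝ) : ℂ))) :
    ContDiff ℝ 1 W := by
  have cp : ContDiff ℝ 1 p := ((hp.contDiff).restrict_scalars ℝ).of_le le_top
  have cq : ContDiff ℝ 1 q := ((hq.contDiff).restrict_scalars ℝ).of_le le_top
  have hdp : Differentiable ℂ (deriv p) := (contDiff_infty_iff_deriv.mp hp.contDiff).2.differentiable (by norm_num)
  have hdq : Differentiable ℂ (deriv q) := (contDiff_infty_iff_deriv.mp hq.contDiff).2.differentiable (by norm_num)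
  have cdp : ContDiff ℝ 1 (deriv p) := ((hdp.contDiff).restrict_scalars ℝ).of_le le_top
  have cdq : ContDiff ℝ 1 (deriv q) := ((hdq.contDiff).restrict_scalars ℝ).of_le le_top
  have cconj : ContDiff ℝ 1 (fun z : ℂ => (starRingEnd ℂ) z) := Complex.conjCLE.contDiff.of_le le_top
  have ccp : ContDiff ℝ 1 (fun z => (starRingEnd ℂ) (p z)) := cconj.comp cp
  have ccq : ContDiff ℝ 1 (fun z => (starRingEnd ℂ) (q z)) := cconj.comp cq
  have ccdp : ContDiff ℝ 1 (fun z => (starRingEnd ℂ) (deriv p z)) := cconj.comp cdp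
  have ccdq : ContDiff ℝ 1 (fun z => (starRingEnd ℂ) (deriv q z)) := cconj.comp cdq
  have key : ∀ z, W z =
      -((p z * (starRingEnd ℂ) (p z)) ^ 2 + (q z * (starRingEnd ℂ) (q z)) ^ 2)⁻¹ *
        (p z * (starRingEnd ℂ) (deriv p z) * (q z * (starRingEnd ℂ) (q z)) -
         q z * (starRingEnd ℂ) (deriv q z) * (p z * (starRingEnd ℂ) (p z))) := by
    intro z
    rw [hW z, Complex.mul_conj, Complex.mul_conj, ← Complex.sq_norm, ← Complex.sq_norm]
    push_cast
    ring_nf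
  have hA : ∀ z, (p z * (starRingEnd ℂ) (p z)) ^ 2 + (q z * (starRingEnd ℂ) (q z)) ^ 2 ≠ 0 := by
    intro z
    rw [Complex.mul_conj, Complex.mul_conj, ← Complex.ofReal_pow, ← Complex.ofReal_pow,
      ← Complex.ofReal_add]
    rw [Complex.ofReal_ne_zero]
    rcases hpq z with h | h
    · have : 0 < Complex.normSq (p z) := Complex.normSq_pos.mpr h
      positivity
    · have : 0 < Complex.normSq (q z) := Complex.normSq_pos.mpr h
      positivity
  have : ContDiff ℝ 1 (fun z =>
      -((p z * (starRingEnd ℂ) (p z)) ^ 2 + (q z * (starRingEnd ℂ) (q z)) ^ 2)⁻¹ *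
        (p z * (starRingEnd ℂ) (deriv p z) * (q z * (starRingEnd ℂ) (q z)) -
         q z * (starRingEnd ℂ) (deriv q z) * (p z * (starRingEnd ℂ) (p z)))) := by
    apply ContDiff.mul
    · exact (((((cp.mul ccp).pow 2).add ((cq.mul ccq).pow 2)).inv hA).neg)
    · exact ((cp.mul ccdp).mul (cq.mul ccq)).sub ((cq.mul ccdq).mul (cp.mul ccp))
  have hWe : W = _ := funext key
  rw [hWe]; exact this
end

section
/- Let F : ℝ² → ℝ² be differentiable, let M be an invertible 2×2 real matrix with det M = 1, and set G = F ∘ M⁻¹ (i.e. G(y) = F(M⁻¹y)). For y ∈ ℝ² let DF(y), DG(y) denote the 2×2 Jacobian matrices of F and G at y, and let ‖·‖ be the Euclidean norm. If x : ℝ → ℝ² satisfies, for every t in an interval I, that x has derivative −(1 + ‖F(x(t))‖⁴)⁻¹ · adj(DF(x(t))) · F(x(t)) at t, then y(t) := M·x(t) satisfies, for every t ∈ I, that y has derivative −(1 + ‖G(y(t))‖⁴)⁻¹ · adj(DG(y(t))) · G(y(t)) at t. Thus a unimodular linear change of coordinates maps trajectories of the desingularized Newton system for F onto trajectories of the desingularized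 Newton system for G. -/
/-!
Write `y = M x` and `G = F ∘ M⁻¹`. Then `G (M x) = F x` and, by the chain rule,
`DG (M x) = DF x * M⁻¹`, so `adj (DG (M x)) = adj M⁻¹ * adj (DF x) = M * adj (DF x)` because
`det M = 1`. Hence the desingularized Newton field of `G` at `M x` is `M` applied to that of `F`
at `x`, which is exactly the derivative of `t ↦ M x(t)`.
-/

open Matrix

namespace Matrix

theorem adjugate_nonsing_inv_of_det_eq_one {α n : Type*} [CommRing α] [Fintype n]
    [DecidableEq n] {M : Matrix n n α} (hdet : M.det = 1) : adjugate M⁻¹ = M := by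
  have hdet_inv : M⁻¹.det = 1 := by rw [det_nonsing_inv, hdet, Ring.inverse_one]
  have h := mul_adjugate M⁻¹
  rw [hdet_inv, one_smul] at h
  rw [← inv_eq_right_inv h, nonsing_inv_nonsing_inv M (by rw [hdet]; exact isUnit_one)]

theorem toEuclideanLin_nonsing_inv_apply_self {𝕜 n : Type*} [RCLike 𝕜] [Fintype n]
    [DecidableEq n] {M : Matrix n n 𝕜} (h : IsUnit M.det)
    (v : EuclideanSpace 𝕜 n) : toEuclideanLin M⁻¹ (toEuclideanLin M v) = v := by
  rw [← LinearMap.comp_apply, ← toLpLin_mul_same, nonsing_inv_mul M h, toLpLin_one,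
    LinearMap.id_apply]

end Matrix

section Jacobian

variable {𝕜 : Type*} [RCLike 𝕜] {m n p : Type*} [Fintype m] [Fintype n] [Fintype p]
  [DecidableEq n] [DecidableEq p]

theorem HasFDerivAt.comp_toEuclideanLin {F : EuclideanSpace 𝕜 n → EuclideanSpace 𝕜 m}
    {A : Matrix m n 𝕜} {N : Matrix n p 𝕜} {y : EuclideanSpace 𝕜 p}
    (hF : HasFDerivAt F (toEuclideanLin A).toContinuousLinearMap (toEuclideanLin N y)) :
    HasFDerivAt (fun z => F (toEuclideanLin N z)) (toEuclideanLin (A * N)).toContinuousLinearMap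
      y := by
  refine (hF.comp y (toEuclideanLin N).toContinuousLinearMap.hasFDerivAt).congr_fderiv ?_
  ext1 v
  simp [toLpLin_mul (q := 2)]

theorem HasFDerivAt.toEuclideanLin_unique {F : EuclideanSpace 𝕜 n → EuclideanSpace 𝕜 m}
    {A B : Matrix m n 𝕜} {y : EuclideanSpace 𝕜 n}
    (hA : HasFDerivAt F (toEuclideanLin A).toContinuousLinearMap y)
    (hB : HasFDerivAt F (toEuclideanLin B).toContinuousLinearMap y) : A = B :=
  toEuclideanLin.injective <| LinearMap.toContinuousLinearMap.injective (hA.unique hB)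

end Jacobian

section DesingularizedNewtonField

variable {n : Type*} [Fintype n] [DecidableEq n]

noncomputable def desingularizedNewtonField (F : EuclideanSpace ℝ n → EuclideanSpace ℝ n)
    (DF : EuclideanSpace ℝ n → Matrix n n ℝ) (y : EuclideanSpace ℝ n) : EuclideanSpace ℝ n :=
  (-(1 + ‖F y‖ ^ 4)⁻¹) • toEuclideanLin (DF y).adjugate (F y)

theorem desingularizedNewtonField_toEuclideanLin_of_det_eq_one
    {F G : EuclideanSpace ℝ n → EuclideanSpace ℝ n} {DF DG : EuclideanSpace ℝ n → Matrix n n ℝ}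
    {M : Matrix n n ℝ} (hdet : M.det = 1) {v : EuclideanSpace ℝ n}
    (hGv : G (toEuclideanLin M v) = F v) (hDGv : DG (toEuclideanLin M v) = DF v * M⁻¹) :
    desingularizedNewtonField G DG (toEuclideanLin M v) =
      toEuclideanLin M (desingularizedNewtonField F DF v) := by
  rw [desingularizedNewtonField, desingularizedNewtonField, hGv, hDGv, adjugate_mul_distrib,
    adjugate_nonsing_inv_of_det_eq_one hdet, toLpLin_mul_same, LinearMap.comp_apply, map_smul]

end DesingularizedNewtonField

theorem newton_system_unimodular_invariance_general
    (F G : EuclideanSpace ℝ (Fin 2) → EuclideanSpace ℝ (Fin 2))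
    (DF DG : EuclideanSpace ℝ (Fin 2) → Matrix (Fin 2) (Fin 2) ℝ)
    (hDF : ∀ y, HasFDerivAt F (LinearMap.toContinuousLinearMap (Matrix.toEuclideanLin (DF y))) y)
    (hDG : ∀ y, HasFDerivAt G (LinearMap.toContinuousLinearMap (Matrix.toEuclideanLin (DG y))) y)
    (M : Matrix (Fin 2) (Fin 2) ℝ) (hdet : M.det = 1)
    (hG : ∀ y, G y = F (Matrix.toEuclideanLin M⁻¹ y))
    (I : Set ℝ)
    (x : ℝ → EuclideanSpace ℝ (Fin 2))
    (hx : ∀ t ∈ I, HasDerivAt x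
      ((-(1 + ‖F (x t)‖ ^ 4)⁻¹) •
        (Matrix.toEuclideanLin (DF (x t)).adjugate (F (x t)))) t) :
    ∀ t ∈ I, HasDerivAt (fun s => Matrix.toEuclideanLin M (x s))
      ((-(1 + ‖G (Matrix.toEuclideanLin M (x t))‖ ^ 4)⁻¹) •
        (Matrix.toEuclideanLin (DG (Matrix.toEuclideanLin M (x t))).adjugate
          (G (Matrix.toEuclideanLin M (x t))))) t := by
  intro t ht
  have hback : toEuclideanLin M⁻¹ (toEuclideanLin M (x t)) = x t :=
    toEuclideanLin_nonsing_inv_apply_self (by rw [hdet]; exact isUnit_one) (x t)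
  have hGx : G (toEuclideanLin M (x t)) = F (x t) := by rw [hG, hback]
  have hDGx : DG (toEuclideanLin M (x t)) = DF (x t) * M⁻¹ := by
    refine (hDG _).toEuclideanLin_unique ?_
    rw [funext hG]
    exact HasFDerivAt.comp_toEuclideanLin (A := DF (x t)) (by rw [hback]; exact hDF (x t))
  have hfield := desingularizedNewtonField_toEuclideanLin_of_det_eq_one hdet hGx hDGx
  rw [desingularizedNewtonField, desingularizedNewtonField] at hfield
  rw [hfield]
  exact (toEuclideanLin M).toContinuousLinearMap.hasFDerivAt.comp_hasDerivAt t (hx t ht)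

/-- A unimodular linear change of coordinates `y = Mx` maps trajectories
of the desingularized Newton system for `F` onto trajectories of the desingularized
Newton system for `G = F ∘ M⁻¹`. -/
theorem newton_system_unimodular_invariance
    (F G : EuclideanSpace ℝ (Fin 2) → EuclideanSpace ℝ (Fin 2))
    (DF DG : EuclideanSpace ℝ (Fin 2) → Matrix (Fin 2) (Fin 2) ℝ)
    (hDF : ∀ y, HasFDerivAt F (LinearMap.toContinuousLinearMap (Matrix.toEuclideanLin (DF y))) y)
    (hDG : ∀ y, HasFDerivAt G (LinearMap.toContinuousLinearMap (Matrix.toEuclideanLin (DG y))) y)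
    (M : Matrix (Fin 2) (Fin 2) ℝ) (hM : IsUnit M) (hdet : M.det = 1)
    (hG : ∀ y, G y = F (Matrix.toEuclideanLin M⁻¹ y))
    (I : Set ℝ) (hI : I.OrdConnected)
    (x : ℝ → EuclideanSpace ℝ (Fin 2))
    (hx : ∀ t ∈ I, HasDerivAt x
      ((-(1 + ‖F (x t)‖ ^ 4)⁻¹) •
        (Matrix.toEuclideanLin (DF (x t)).adjugate (F (x t)))) t) :
    ∀ t ∈ I, HasDerivAt (fun s => Matrix.toEuclideanLin M (x s))
      ((-(1 + ‖G (Matrix.toEuclideanLin M (x t))‖ ^ 4)⁻¹) •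
        (Matrix.toEuclideanLin (DG (Matrix.toEuclideanLin M (x t))).adjugate
          (G (Matrix.toEuclideanLin M (x t))))) t :=
  newton_system_unimodular_invariance_general F G DF DG hDF hDG M hdet hG I x hx
end

section
/- Let f : ℂ → ℂ, let α ∈ ℂ with α ≠ 0, and define f^α : ℂ → ℂ by f^α(w) = f(α⁻¹·w). Let I ⊆ ℝ be an interval and let z : ℝ → ℂ satisfy: for every t ∈ I, f is complex differentiable at z(t) and z has derivative V_f(z(t)) at t. Then w(t) := α·z(t) satisfies, for every t ∈ I, that w has derivative |α|² · V_{f^α}(w(t)) at t. Hence the map z ↦ αz carries trajectories of the desingularized Newton flow of f onto trajectories of the desingularized Newton flow of f^α, preserving orientation. -/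
open Complex

/-! Since `deriv` of `w ↦ f (α⁻¹ * w)` is `α⁻¹ • (deriv f) (α⁻¹ * w)` with no differentiability
assumption (both sides are `0` otherwise), the Newton field of `f^α` at `α z` is the field of `f`
at `z` with `f'` replaced by `α⁻¹ f'`. Conjugating, `|α|² · conj α⁻¹ = α`, so `|α|² V_{f^α}(α z)`
is `α V_f(z)`, which is the derivative of `α z(t)` by the chain rule. -/

lemma Complex.ofReal_norm_sq_mul_conj_inv (α : ℂ) :
    ((‖α‖ ^ 2 : ℝ) : ℂ) * (starRingEnd ℂ) α⁻¹ = α := by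
  rcases eq_or_ne α 0 with rfl | hα
  · simp
  rw [map_inv₀, ofReal_pow, ← mul_conj', mul_assoc, mul_inv_cancel₀ ((map_ne_zero _).mpr hα),
    mul_one]

lemma norm_sq_smul_desingNewton_comp_inv_mul (f : ℂ → ℂ) (α z : ℂ) :
    (‖α‖ ^ 2 : ℝ) • desingNewton (fun w => f (α⁻¹ * w)) (α * z) = α * desingNewton f z := by
  rcases eq_or_ne α 0 with rfl | hα
  · simp
  have hderiv : deriv (fun w => f (α⁻¹ * w)) (α * z) = α⁻¹ * deriv f z := by
    rw [deriv_comp_mul_left, inv_mul_cancel_left₀ hα, smul_eq_mul]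
  simp only [desingNewton, hderiv, inv_mul_cancel_left₀ hα, map_mul, Complex.real_smul]
  conv_rhs => rw [← Complex.ofReal_norm_sq_mul_conj_inv α]
  ring

theorem desingNewton_scaling_of_lattice_general
    (f : ℂ → ℂ) (α : ℂ)
    (I : Set ℝ) (z : ℝ → ℂ)
    (hz : ∀ t ∈ I, DifferentiableAt ℂ f (z t) ∧ HasDerivAt z (desingNewton f (z t)) t) :
    ∀ t ∈ I, HasDerivAt (fun s => α * z s)
      ((‖α‖ ^ 2 : ℝ) • desingNewton (fun w => f (α⁻¹ * w)) (α * z t)) t := by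
  intro t ht
  rw [norm_sq_smul_desingNewton_comp_inv_mul]
  exact (hz t ht).2.const_mul α

/-- The map `z ↦ αz` carries trajectories of the desingularized Newton
flow of `f` onto trajectories of the desingularized Newton flow of
`f^α : w ↦ f(α⁻¹ w)` (up to the positive factor `|α|²`), preserving orientation. -/
theorem desingNewton_scaling_of_lattice
    (f : ℂ → ℂ) (α : ℂ) (hα : α ≠ 0)
    (I : Set ℝ) (hI : I.OrdConnected) (z : ℝ → ℂ)
    (hz : ∀ t ∈ I, DifferentiableAt ℂ f (z t) ∧ HasDerivAt z (desingNewton f (z t)) t) :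
    ∀ t ∈ I, HasDerivAt (fun s => α * z s)
      ((‖α‖ ^ 2 : ℝ) • desingNewton (fun w => f (α⁻¹ * w)) (α * z t)) t :=
  desingNewton_scaling_of_lattice_general f α I z hz
end

section
/- Let f, g : ℂ → ℂ be meromorphic on ℂ, both doubly periodic with periods ω₁ and ω₂ where Im(ω₂/ω₁) > 0 (i.e. f(z+ω₁) = f(z), f(z+ω₂) = f(z), and likewise for g, for all z), and suppose g is not identically zero. If at every point z ∈ ℂ the order of f at z equals the order of g at z (f and g have the same zeros and poles with the same multiplicities), then there exists a constant C ∈ ℂ, C ≠ 0, such that f(z) = C·g(z) at every point z where both f and g are analytic. (Thus an elliptic function is determined by its zeros and poles up to a nonzero multiplicative constant.) -/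
/-!
Since `f` and `g` have the same order everywhere, `f / g` has order `0` at every point, so its
meromorphic normal form is an entire, nowhere vanishing, doubly periodic function. Such a function
takes all its values on the compact closure of a fundamental parallelogram, so it is bounded and
hence constant by Liouville. If instead `g` has order `⊤` somewhere, then by connectedness `f` and
`g` both vanish near every point, and any constant works.
-/

open Filter Set Topology Function

theorem linearIndependent_pair_of_im_div_pos {ω₁ ω₂ : ℂ} (him : 0 < (ω₂ / ω₁).im) :
    LinearIndependent ℝ ![ω₁, ω₂] := by
  have hω₁ : ω₁ ≠ 0 := by rintro rfl; simp at him
  refine LinearIndependent.pair_iff.2 fun s t hst => ?_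
  have hdiv : (s : ℂ) + t * (ω₂ / ω₁) = 0 := by
    rw [Complex.real_smul, Complex.real_smul] at hst
    field_simp
    linear_combination hst
  have ht : t = 0 := by
    simpa [him.ne'] using congrArg Complex.im hdiv
  subst ht
  simpa using hdiv

theorem ContinuousAt.eq_of_eventuallyEq_nhdsNE {X Y : Type*} [TopologicalSpace X]
    [TopologicalSpace Y] [T2Space Y] {x : X} [(𝓝[≠] x).NeBot] {f g : X → Y}
    (hf : ContinuousAt f x) (hg : ContinuousAt g x) (hfg : f =ᶠ[𝓝[≠] x] g) : f x = g x :=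
  ((hf.eventuallyEq_nhds_iff_eventuallyEq_nhdsNE hg).1 hfg).eq_of_nhds

theorem Function.Periodic.of_eventuallyEq_nhdsNE {G Y : Type*} [TopologicalSpace G] [AddGroup G]
    [IsTopologicalAddGroup G] [∀ x : G, (𝓝[≠] x).NeBot] [TopologicalSpace Y] [T2Space Y]
    {φ H : G → Y} {c : G} (hφ : Periodic φ c) (hH : Continuous H)
    (hHφ : ∀ z, H =ᶠ[𝓝[≠] z] φ) : Periodic H c := by
  intro z
  have hshift : (fun w => H (w + c)) =ᶠ[𝓝[≠] z] H := by
    filter_upwards [(hHφ (z + c)).comp_tendsto map_add_right_nhdsNE.le, hHφ z] with w h₁ h₂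
    rw [comp_apply, comp_apply, hφ] at h₁
    rw [h₁, h₂]
  exact (hH.comp (continuous_add_const c)).continuousAt.eq_of_eventuallyEq_nhdsNE
    hH.continuousAt hshift

namespace PeriodPair

variable (L : PeriodPair) {E : Type*}

theorem periodic_of_mem_lattice {F : ℂ → E} (h₁ : Periodic F L.ω₁)
    (h₂ : Periodic F L.ω₂) {l : ℂ} (hl : l ∈ L.lattice) : Periodic F l := by
  obtain ⟨m, n, rfl⟩ := mem_lattice.1 hl
  exact (h₁.int_mul m).add_period (h₂.int_mul n)

theorem isBounded_range_of_periodic [PseudoMetricSpace E] {F : ℂ → E} (hF : Continuous F)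
    (h₁ : Periodic F L.ω₁) (h₂ : Periodic F L.ω₂) : Bornology.IsBounded (range F) := by
  have hK : IsCompact (closure (ZSpan.fundamentalDomain L.basis)) :=
    (ZSpan.fundamentalDomain_isBounded L.basis).isCompact_closure
  refine (hK.image hF).isBounded.subset ?_
  rintro - ⟨z, rfl⟩
  have hfloor : (ZSpan.floor L.basis z : ℂ) ∈ L.lattice := by
    rw [lattice_eq_span_range_basis]; exact (ZSpan.floor L.basis z).2
  refine ⟨ZSpan.fract L.basis z, subset_closure (ZSpan.fract_mem_fundamentalDomain _ z), ?_⟩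
  exact L.periodic_of_mem_lattice h₁ h₂ hfloor |>.sub_eq z

theorem exists_eventuallyEq_const_of_meromorphicOrderAt_nonneg [NormedAddCommGroup E]
    [NormedSpace ℂ E] {φ : ℂ → E} (hφ : MeromorphicOn φ univ) (h₁ : Periodic φ L.ω₁)
    (h₂ : Periodic φ L.ω₂) (hord : ∀ z, 0 ≤ meromorphicOrderAt φ z) :
    ∃ C, ∀ z, φ =ᶠ[𝓝[≠] z] fun _ => C := by
  set H := toMeromorphicNFOn φ univ
  have hHφ : ∀ z, H =ᶠ[𝓝[≠] z] φ := fun z =>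
    hφ.toMeromorphicNFOn_eq_self_on_nhdsNE (mem_univ z)
  have hH : Differentiable ℂ H := fun z => by
    have hNF := meromorphicNFOn_toMeromorphicNFOn φ univ (mem_univ z)
    refine (hNF.meromorphicOrderAt_nonneg_iff_analyticAt.1 ?_).differentiableAt
    simpa only [H, meromorphicOrderAt_toMeromorphicNFOn hφ (mem_univ z)] using hord z
  obtain ⟨C, hC⟩ := hH.exists_const_forall_eq_of_bounded <| L.isBounded_range_of_periodic
    hH.continuous (h₁.of_eventuallyEq_nhdsNE hH.continuous hHφ)
    (h₂.of_eventuallyEq_nhdsNE hH.continuous hHφ)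
  exact ⟨C, fun z => (hHφ z).symm.trans (Eventually.of_forall hC)⟩

theorem exists_ne_zero_eventuallyEq_const_mul {f g : ℂ → ℂ} (hf : MeromorphicOn f univ)
    (hg : MeromorphicOn g univ) (hf₁ : Periodic f L.ω₁) (hf₂ : Periodic f L.ω₂)
    (hg₁ : Periodic g L.ω₁) (hg₂ : Periodic g L.ω₂)
    (horder : ∀ z, meromorphicOrderAt f z = meromorphicOrderAt g z) :
    ∃ C ≠ 0, ∀ z, f =ᶠ[𝓝[≠] z] fun w => C * g w := by
  by_cases hfin : ∃ z₀, meromorphicOrderAt g z₀ ≠ ⊤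
  · obtain ⟨z₀, hz₀⟩ := hfin
    have hg_fin : ∀ z, meromorphicOrderAt g z ≠ ⊤ := fun z =>
      hg.meromorphicOrderAt_ne_top_of_isPreconnected isPreconnected_univ (mem_univ z₀)
        (mem_univ z) hz₀
    have hord : ∀ z, meromorphicOrderAt (f / g) z = 0 := fun z => by
      rw [meromorphicOrderAt_div (hf z (mem_univ z)) (hg z (mem_univ z)), horder z,
        LinearOrderedAddCommGroupWithTop.sub_self_eq_zero_of_ne_top (hg_fin z)]
    obtain ⟨C, hC⟩ := L.exists_eventuallyEq_const_of_meromorphicOrderAt_nonneg (hf.div hg)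
      (hf₁.div hg₁) (hf₂.div hg₂) fun z => (hord z).ge
    have hC0 : C ≠ 0 := by
      rintro rfl
      simpa [hord z₀] using meromorphicOrderAt_eq_top_iff.2 (hC z₀)
    refine ⟨C, hC0, fun z => ?_⟩
    filter_upwards [hC z, (meromorphicOrderAt_ne_top_iff_eventually_ne_zero
      (hg z (mem_univ z))).1 (hg_fin z)] with w hw hgw
    rw [← hw, Pi.div_apply, div_mul_cancel₀ _ hgw]
  · push Not at hfin
    refine ⟨1, one_ne_zero, fun z => ?_⟩
    filter_upwards [meromorphicOrderAt_eq_top_iff.1 ((horder z).trans (hfin z)),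
      meromorphicOrderAt_eq_top_iff.1 (hfin z)] with w hfw hgw
    simp [hfw, hgw]

end PeriodPair

theorem elliptic_determined_by_zeros_and_poles_general
    (f g : ℂ → ℂ)
    (hf : MeromorphicOn f Set.univ) (hg : MeromorphicOn g Set.univ)
    (ω₁ ω₂ : ℂ) (him : 0 < (ω₂ / ω₁).im)
    (hfω₁ : ∀ z : ℂ, f (z + ω₁) = f z) (hfω₂ : ∀ z : ℂ, f (z + ω₂) = f z)
    (hgω₁ : ∀ z : ℂ, g (z + ω₁) = g z) (hgω₂ : ∀ z : ℂ, g (z + ω₂) = g z)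
    (horder : ∀ z : ℂ, meromorphicOrderAt f z = meromorphicOrderAt g z) :
    ∃ C : ℂ, C ≠ 0 ∧
      ∀ z : ℂ, AnalyticAt ℂ f z → AnalyticAt ℂ g z → f z = C * g z := by
  let L : PeriodPair := ⟨ω₁, ω₂, linearIndependent_pair_of_im_div_pos him⟩
  obtain ⟨C, hC0, hfg⟩ :=
    L.exists_ne_zero_eventuallyEq_const_mul hf hg hfω₁ hfω₂ hgω₁ hgω₂ horder
  exact ⟨C, hC0, fun z hfz hgz =>
    hfz.continuousAt.eq_of_eventuallyEq_nhdsNE (hgz.continuousAt.const_mul C) (hfg z)⟩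

/-- Two doubly periodic meromorphic functions (elliptic functions) with
the same zeros and poles, counted with multiplicities (i.e. the same order at every
point), agree up to a nonzero multiplicative constant wherever both are analytic. -/
theorem elliptic_determined_by_zeros_and_poles
    (f g : ℂ → ℂ)
    (hf : MeromorphicOn f Set.univ) (hg : MeromorphicOn g Set.univ)
    (ω₁ ω₂ : ℂ) (him : 0 < (ω₂ / ω₁).im)
    (hfω₁ : ∀ z : ℂ, f (z + ω₁) = f z) (hfω₂ : ∀ z : ℂ, f (z + ω₂) = f z)
    (hgω₁ : ∀ z : ℂ, g (z + ω₁) = g z) (hgω₂ : ∀ z : ℂ, g (z + ω₂) = g z)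
    (hg0 : ∃ z : ℂ, g z ≠ 0)
    (horder : ∀ z : ℂ, meromorphicOrderAt f z = meromorphicOrderAt g z) :
    ∃ C : ℂ, C ≠ 0 ∧
      ∀ z : ℂ, AnalyticAt ℂ f z → AnalyticAt ℂ g z → f z = C * g z :=
  elliptic_determined_by_zeros_and_poles_general f g hf hg ω₁ ω₂ him hfω₁ hfω₂ hgω₁ hgω₂ horder
end
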